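/- Let c be the real Banach space of convergent sequences with the sup norm, and let X = {(x, y, z) ∈ c ⊕_∞ c ⊕_∞ c : lim x + lim y + lim z = 0}. Then for every boundary C ⊆ S_{X*} of B_{X*}, there exist x* ∈ C and an extreme point x** of B_{X**} such that |x**(x*)| < 1. -/

import Mathlib

/-!
A functional `f` of norm one with `f x₀ = 1`, where `x₀ = (n/(n+1), -n/(n+1), 0)`, kills every
triple of null sequences: `x₀` attains its norm at no coordinate, so moving it a small step `s`
along a null triple raises the norm by at most `s ε`. Hence `f` sees only the limits:
`f = a • lim₁ + (a - 1) • lim₂` with `0 ≤ a ≤ 1`. Since `lim₁ + lim₂ = -lim₃`, the norm of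
`t₁ • lim₁ + t₂ • lim₂` is at most `max |t₁| |t₂| |t₁ - t₂|`, and for
`g = (1 - a/2) • lim₁ + ((1 + a)/2) • lim₂` this gives `‖g ± f‖ ≤ ‖g‖ + 1/2`. By Bauer's maximum
principle on the weak-* compact ball, some extreme point `F` of `B_{X**}` has `F g = ‖g‖`, and
then `|F f| ≤ 1/2`.
-/

open Filter Topology Metric
open scoped ENNReal

set_option maxHeartbeats 1000000
set_option synthInstance.maxHeartbeats 1000000

/-- The ambient space of `c ⊕_∞ c ⊕_∞ c`: triples of bounded real sequences with the
`ℓ_∞`-sum of the sup norms, `‖(x,y,z)‖ = max (‖x‖, ‖y‖, ‖z‖)`. -/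
noncomputable abbrev BddSeqTriple : Type :=
  (lp (fun _ : ℕ => ℝ) ∞) × (lp (fun _ : ℕ => ℝ) ∞) × (lp (fun _ : ℕ => ℝ) ∞)

/-- The space `X = {(x,y,z) ∈ c ⊕_∞ c ⊕_∞ c : lim x + lim y + lim z = 0}`: the subspace of
triples of *convergent* sequences whose limits add up to `0`, inside the sup-normed space of
triples of bounded sequences (so it carries exactly the norm of `c ⊕_∞ c ⊕_∞ c`). -/
noncomputable def limSumZeroSubspace : Submodule ℝ BddSeqTriple where
  carrier := {p | ∃ a b c : ℝ, Filter.Tendsto (⇑p.1) Filter.atTop (nhds a) ∧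
    Filter.Tendsto (⇑p.2.1) Filter.atTop (nhds b) ∧
    Filter.Tendsto (⇑p.2.2) Filter.atTop (nhds c) ∧ a + b + c = 0}
  add_mem' := by
    rintro p q ⟨a, b, c, ha, hb, hc, habc⟩ ⟨a', b', c', ha', hb', hc', habc'⟩
    refine ⟨a + a', b + b', c + c', ?_, ?_, ?_, by linarith⟩
    · exact (ha.add ha').congr fun n => by simp [lp.coeFn_add]
    · exact (hb.add hb').congr fun n => by simp [lp.coeFn_add]
    · exact (hc.add hc').congr fun n => by simp [lp.coeFn_add]
  zero_mem' := ⟨0, 0, 0,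
    by simp only [Prod.fst_zero, lp.coeFn_zero]; exact tendsto_const_nhds,
    by simp only [Prod.snd_zero, Prod.fst_zero, lp.coeFn_zero]; exact tendsto_const_nhds,
    by simp only [Prod.snd_zero, lp.coeFn_zero]; exact tendsto_const_nhds, by ring⟩
  smul_mem' := by
    rintro r p ⟨a, b, c, ha, hb, hc, habc⟩
    refine ⟨r * a, r * b, r * c, ?_, ?_, ?_, by rw [← mul_add, ← mul_add, habc, mul_zero]⟩
    · exact (ha.const_mul r).congr fun n => by simp [lp.coeFn_smul]
    · exact (hb.const_mul r).congr fun n => by simp [lp.coeFn_smul]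
    · exact (hc.const_mul r).congr fun n => by simp [lp.coeFn_smul]

/-- The dual space `X*` of `X`, as a type (with its canonical dual norm). -/
noncomputable def XDual : Type := StrongDual ℝ ↥limSumZeroSubspace

noncomputable instance : NormedAddCommGroup XDual :=
  inferInstanceAs (NormedAddCommGroup (StrongDual ℝ ↥limSumZeroSubspace))

noncomputable instance : NormedSpace ℝ XDual :=
  inferInstanceAs (NormedSpace ℝ (StrongDual ℝ ↥limSumZeroSubspace))

/-- An element of `X*`, viewed as a continuous linear functional on `X`. -/
def XDual.toFunctional (f : XDual) : ↥limSumZeroSubspace →L[ℝ] ℝ := f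

section Dual

variable {E : Type*} [SeminormedAddCommGroup E] [NormedSpace ℝ E]

lemma apply_le_norm_of_norm_le_one {f : StrongDual ℝ E} (hf : ‖f‖ ≤ 1) (x : E) : f x ≤ ‖x‖ :=
  (le_abs_self _).trans ((f.le_of_opNorm_le hf x).trans_eq (one_mul _))

lemma abs_apply_le_of_apply_eq_norm {F : StrongDual ℝ E} (hF : ‖F‖ ≤ 1) {g : E}
    (hFg : F g = ‖g‖) (f : E) : |F f| ≤ max ‖g + f‖ ‖g - f‖ - ‖g‖ := by
  have hadd := apply_le_norm_of_norm_le_one hF (g + f)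
  have hsub := apply_le_norm_of_norm_le_one hF (g - f)
  rw [map_add, hFg] at hadd
  rw [map_sub, hFg] at hsub
  rw [abs_le]
  constructor <;> linarith [le_max_left ‖g + f‖ ‖g - f‖, le_max_right ‖g + f‖ ‖g - f‖]

lemma apply_nonpos_of_eventually_norm_add_smul_le {f : StrongDual ℝ E} (hf : ‖f‖ ≤ 1) {x p : E}
    (hfx : f x = ‖x‖) (hp : ∀ ε > 0, ∀ᶠ s in 𝓝[>] (0 : ℝ), ‖x + s • p‖ ≤ ‖x‖ + s * ε) :
    f p ≤ 0 := by
  refine le_of_forall_pos_le_add fun ε hε => ?_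
  obtain ⟨s, hs, hs₀⟩ := ((hp ε hε).and self_mem_nhdsWithin).exists
  have : ‖x‖ + s * f p ≤ ‖x‖ + s * ε := calc
    ‖x‖ + s * f p = f (x + s • p) := by rw [map_add, map_smul, hfx, smul_eq_mul]
    _ ≤ ‖x + s • p‖ := apply_le_norm_of_norm_le_one hf _
    _ ≤ ‖x‖ + s * ε := hs
  rw [zero_add]
  exact le_of_mul_le_mul_left (by linarith) (hs₀ : (0 : ℝ) < s)

end Dual

section Bauer

variable {E : Type*} [NormedAddCommGroup E] [NormedSpace ℝ E]

instance : LocallyConvexSpace ℝ (WeakDual ℝ E) := WeakBilin.locallyConvexSpace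

theorem exists_mem_extremePoints_closedBall_dual_apply_eq_norm (x : E) :
    ∃ F ∈ (closedBall (0 : StrongDual ℝ E) 1).extremePoints ℝ, F x = ‖x‖ := by
  set B : Set (WeakDual ℝ E) := WeakDual.toStrongDual ⁻¹' closedBall 0 1
  have hB : IsCompact B := WeakDual.isCompact_closedBall 0 1
  obtain ⟨G, hGB, hGmax⟩ := hB.exists_isMaxOn ⟨0, by simp [B]⟩
    (WeakDual.eval_continuous (𝕜 := ℝ) x).continuousOn
  set S : Set (WeakDual ℝ E) := {F ∈ B | ∀ H ∈ B, H x ≤ F x}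
  have hS : IsExposed ℝ B S := fun _ => ⟨WeakBilin.eval _ x, rfl⟩
  have hSc : IsCompact S := hB.of_isClosed_subset (hS.isClosed hB.isClosed) (Set.sep_subset _ _)
  obtain ⟨F, hF⟩ := hSc.extremePoints_nonempty ⟨G, hGB, hGmax⟩
  refine ⟨F, hS.isExtreme.extremePoints_subset_extremePoints hF, le_antisymm ?_ ?_⟩
  · exact apply_le_norm_of_norm_le_one (f := F.toStrongDual) (by simpa [B] using hF.1.1) x
  · obtain ⟨H, hH, hHx⟩ := exists_dual_vector'' ℝ x
    calc ‖x‖ = H x := hHx.symm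
      _ ≤ F x := hF.1.2 (StrongDual.toWeakDual H) (by simpa [B] using hH)

end Bauer

lemma abs_mul_add_mul_le {t₁ t₂ p q r m : ℝ} (hp : |p| ≤ r) (hq : |q| ≤ r) (hpq : |p + q| ≤ r)
    (h₁ : |t₁| ≤ m) (h₂ : |t₂| ≤ m) (h₁₂ : |t₁ - t₂| ≤ m) : |t₁ * p + t₂ * q| ≤ m * r := by
  have hr : 0 ≤ r := (abs_nonneg p).trans hp
  have key : ∀ {s₁ s₂ α β : ℝ}, |α| ≤ r → |β| ≤ r → |s₁| + |s₂| ≤ m →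
      |s₁ * α + s₂ * β| ≤ m * r := fun {s₁ s₂ α β} hα hβ hs => calc
    |s₁ * α + s₂ * β| ≤ |s₁| * |α| + |s₂| * |β| := by
      simpa only [abs_mul] using abs_add_le (s₁ * α) (s₂ * β)
    _ ≤ (|s₁| + |s₂|) * r := by rw [add_mul]; gcongr
    _ ≤ m * r := by gcongr
  -- Of the three distances between the points `0`, `t₁`, `t₂` of the line, the largest one
  -- is the sum of the other two.
  have hm : |t₁| + |t₂| ≤ m ∨ |t₁ - t₂| + |t₂| ≤ m ∨ |t₁| + |t₂ - t₁| ≤ m := by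
    rw [abs_sub_comm t₂]
    by_contra! h
    rcases abs_cases t₁ with ⟨_, _⟩ | ⟨_, _⟩ <;> rcases abs_cases t₂ with ⟨_, _⟩ | ⟨_, _⟩ <;>
      rcases abs_cases (t₁ - t₂) with ⟨_, _⟩ | ⟨_, _⟩ <;> linarith [h.1, h.2.1, h.2.2]
  rcases hm with hm | hm | hm
  · exact key hp hq hm
  · rw [show t₁ * p + t₂ * q = (t₁ - t₂) * p + t₂ * (p + q) by ring]
    exact key hp hpq hm
  · rw [show t₁ * p + t₂ * q = t₁ * (p + q) + (t₂ - t₁) * q by ring]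
    exact key hpq hq hm

lemma eventually_norm_add_smul_le {α : Type*} {u h : lp (fun _ : α => ℝ) ∞}
    (hu : ∀ n, |u n| < 1) (hh : Tendsto (⇑h) cofinite (𝓝 0)) {ε : ℝ} (hε : 0 < ε) :
    ∀ᶠ s in 𝓝[>] (0 : ℝ), ‖u + s • h‖ ≤ 1 + s * ε := by
  have hI : {n | ¬ |h n| < ε}.Finite := by
    simpa [Real.norm_eq_abs] using
      eventually_cofinite.1 (hh.norm.eventually_lt_const (by simpa using hε))
  have hnear : ∀ᶠ s in 𝓝 (0 : ℝ), ∀ n ∈ {n | ¬ |h n| < ε}, |u n + s * h n| < 1 :=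
    (eventually_all_finite hI).2 fun n _ => ContinuousAt.eventually_lt (by fun_prop)
      continuousAt_const (by simpa using hu n)
  filter_upwards [nhdsWithin_le_nhds hnear, self_mem_nhdsWithin] with s hs (hs₀ : 0 < s)
  refine lp.norm_le_of_forall_le (by positivity) fun n => ?_
  rw [lp.coeFn_add, lp.coeFn_smul, Pi.add_apply, Pi.smul_apply, smul_eq_mul, Real.norm_eq_abs]
  by_cases hn : |h n| < ε
  · calc |u n + s * h n| ≤ |u n| + s * |h n| := by
          simpa [abs_mul, abs_of_pos hs₀] using abs_add_le (u n) (s * h n)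
      _ ≤ 1 + s * ε := by gcongr; exact (hu n).le
  · linarith [hs n hn, mul_pos hs₀ hε]

section SeqLimit

variable {M : Type*} [SeminormedAddCommGroup M] [NormedSpace ℝ M]

lemma abs_le_norm_of_tendsto {x : lp (fun _ : ℕ => ℝ) ∞} {l : ℝ}
    (hx : Tendsto (⇑x) atTop (𝓝 l)) : |l| ≤ ‖x‖ :=
  le_of_tendsto hx.abs (Eventually.of_forall fun n =>
    lp.norm_apply_le_norm (p := ∞) ENNReal.top_ne_zero x n)

noncomputable def limitOfConvergent (π : M →L[ℝ] lp (fun _ : ℕ => ℝ) ∞)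
    (hπ : ∀ w, ∃ l, Tendsto (⇑(π w)) atTop (𝓝 l)) : M →L[ℝ] ℝ :=
  LinearMap.mkContinuous
    { toFun := fun w => limUnder atTop (π w)
      map_add' := fun v w => by
        rw [map_add, lp.coeFn_add]
        exact ((tendsto_nhds_limUnder (hπ v)).add (tendsto_nhds_limUnder (hπ w))).limUnder_eq
      map_smul' := fun c w => by
        rw [map_smul, lp.coeFn_smul]
        exact ((tendsto_nhds_limUnder (hπ w)).const_mul c).limUnder_eq }
    ‖π‖ fun w => (abs_le_norm_of_tendsto (tendsto_nhds_limUnder (hπ w))).trans (π.le_opNorm w)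

variable (π : M →L[ℝ] lp (fun _ : ℕ => ℝ) ∞) (hπ : ∀ w, ∃ l, Tendsto (⇑(π w)) atTop (𝓝 l))

lemma tendsto_limitOfConvergent (w : M) :
    Tendsto (⇑(π w)) atTop (𝓝 (limitOfConvergent π hπ w)) :=
  tendsto_nhds_limUnder (hπ w)

lemma limitOfConvergent_eq {w : M} {l : ℝ} (h : Tendsto (⇑(π w)) atTop (𝓝 l)) :
    limitOfConvergent π hπ w = l :=
  tendsto_nhds_unique (tendsto_limitOfConvergent π hπ w) h

lemma abs_limitOfConvergent_le (w : M) : |limitOfConvergent π hπ w| ≤ ‖π w‖ :=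
  abs_le_norm_of_tendsto (tendsto_limitOfConvergent π hπ w)

end SeqLimit

local notation "X" => {p // p ∈ limSumZeroSubspace}

noncomputable def limFst : X →L[ℝ] ℝ :=
  limitOfConvergent ((ContinuousLinearMap.fst ℝ _ _).comp limSumZeroSubspace.subtypeL)
    fun w => let ⟨a, _, _, ha, _⟩ := w.2; ⟨a, ha⟩

noncomputable def limSnd : X →L[ℝ] ℝ :=
  limitOfConvergent ((ContinuousLinearMap.fst ℝ _ _).comp
    ((ContinuousLinearMap.snd ℝ _ _).comp limSumZeroSubspace.subtypeL))
    fun w => let ⟨_, b, _, _, hb, _⟩ := w.2; ⟨b, hb⟩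

lemma limFst_eq {w : X} {l : ℝ} (h : Tendsto (⇑(w : BddSeqTriple).1) atTop (𝓝 l)) :
    limFst w = l := limitOfConvergent_eq _ _ h

lemma limSnd_eq {w : X} {l : ℝ} (h : Tendsto (⇑(w : BddSeqTriple).2.1) atTop (𝓝 l)) :
    limSnd w = l := limitOfConvergent_eq _ _ h

lemma abs_limFst_le (w : X) : |limFst w| ≤ ‖w‖ :=
  (abs_limitOfConvergent_le _ _ w).trans (norm_fst_le (w : BddSeqTriple))

lemma abs_limSnd_le (w : X) : |limSnd w| ≤ ‖w‖ :=
  (abs_limitOfConvergent_le _ _ w).trans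
    ((norm_fst_le (w : BddSeqTriple).2).trans (norm_snd_le (w : BddSeqTriple)))

lemma abs_limFst_add_limSnd_le (w : X) : |limFst w + limSnd w| ≤ ‖w‖ := by
  obtain ⟨a, b, c, ha, hb, hc, habc⟩ := w.2
  rw [limFst_eq ha, limSnd_eq hb, show a + b = -c by linarith, abs_neg]
  exact (abs_le_norm_of_tendsto hc).trans
    ((norm_snd_le (w : BddSeqTriple).2).trans (norm_snd_le (w : BddSeqTriple)))

noncomputable def natDivSucc : lp (fun _ : ℕ => ℝ) ∞ :=
  ⟨fun n => n / (n + 1),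
    memℓp_infty_iff.2 (tendsto_natCast_div_add_atTop (1 : ℝ)).norm.bddAbove_range⟩

lemma tendsto_natDivSucc : Tendsto (⇑natDivSucc) atTop (𝓝 1) :=
  tendsto_natCast_div_add_atTop 1

lemma natDivSucc_apply (n : ℕ) : natDivSucc n = n / (n + 1) := rfl

lemma abs_natDivSucc_lt_one (n : ℕ) : |natDivSucc n| < 1 := by
  rw [natDivSucc_apply, abs_of_nonneg (by positivity : (0 : ℝ) ≤ n / (n + 1))]
  exact (div_lt_one (by positivity)).2 (lt_add_one _)

noncomputable def x₀ : X :=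
  ⟨(natDivSucc, -natDivSucc, 0), 1, -1, 0, tendsto_natDivSucc, tendsto_natDivSucc.neg,
    tendsto_const_nhds, by norm_num⟩

noncomputable def e₁ : X :=
  ⟨(1, 0, -1), 1, 0, -1, tendsto_const_nhds, tendsto_const_nhds, tendsto_const_nhds, by norm_num⟩

noncomputable def e₂ : X :=
  ⟨(0, 1, -1), 0, 1, -1, tendsto_const_nhds, tendsto_const_nhds, tendsto_const_nhds, by norm_num⟩

lemma limFst_x₀ : limFst x₀ = 1 := limFst_eq tendsto_natDivSucc
lemma limSnd_x₀ : limSnd x₀ = -1 := limSnd_eq tendsto_natDivSucc.neg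
lemma limFst_e₁ : limFst e₁ = 1 := limFst_eq tendsto_const_nhds
lemma limSnd_e₁ : limSnd e₁ = 0 := limSnd_eq tendsto_const_nhds
lemma limFst_e₂ : limFst e₂ = 0 := limFst_eq tendsto_const_nhds
lemma limSnd_e₂ : limSnd e₂ = 1 := limSnd_eq tendsto_const_nhds

lemma norm_e₁_le : ‖e₁‖ ≤ 1 := by simp [e₁]
lemma norm_e₂_le : ‖e₂‖ ≤ 1 := by simp [e₂]

lemma norm_x₀ : ‖x₀‖ = 1 := by
  refine le_antisymm ?_ (by simpa [limFst_x₀] using abs_limFst_le x₀)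
  have h : ‖natDivSucc‖ ≤ 1 :=
    lp.norm_le_of_forall_le zero_le_one fun n => (abs_natDivSucc_lt_one n).le
  simpa [x₀, norm_prod_le_iff] using h

lemma eventually_norm_x₀_add_smul_le {p : X} (h₁ : Tendsto (⇑(p : BddSeqTriple).1) atTop (𝓝 0))
    (h₂ : Tendsto (⇑(p : BddSeqTriple).2.1) atTop (𝓝 0))
    (h₃ : Tendsto (⇑(p : BddSeqTriple).2.2) atTop (𝓝 0)) {ε : ℝ} (hε : 0 < ε) :
    ∀ᶠ s in 𝓝[>] (0 : ℝ), ‖x₀ + s • p‖ ≤ ‖x₀‖ + s * ε := by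
  rw [← Nat.cofinite_eq_atTop] at h₁ h₂ h₃
  filter_upwards [eventually_norm_add_smul_le abs_natDivSucc_lt_one h₁ hε,
    eventually_norm_add_smul_le (u := -natDivSucc) (by simpa using abs_natDivSucc_lt_one) h₂ hε,
    eventually_norm_add_smul_le (u := 0) (by simp) h₃ hε] with s hs₁ hs₂ hs₃
  rw [norm_x₀]
  exact norm_prod_le_iff.2 ⟨hs₁, norm_prod_le_iff.2 ⟨hs₂, hs₃⟩⟩

lemma apply_eq_zero_of_tendsto_zero {f : StrongDual ℝ X} (hf : ‖f‖ ≤ 1) (hfx : f x₀ = 1) {p : X}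
    (h₁ : Tendsto (⇑(p : BddSeqTriple).1) atTop (𝓝 0))
    (h₂ : Tendsto (⇑(p : BddSeqTriple).2.1) atTop (𝓝 0))
    (h₃ : Tendsto (⇑(p : BddSeqTriple).2.2) atTop (𝓝 0)) : f p = 0 := by
  have hfx' : f x₀ = ‖x₀‖ := by rw [hfx, norm_x₀]
  refine le_antisymm (apply_nonpos_of_eventually_norm_add_smul_le hf hfx' fun ε hε =>
    eventually_norm_x₀_add_smul_le h₁ h₂ h₃ hε) ?_
  have := apply_nonpos_of_eventually_norm_add_smul_le hf hfx' fun ε hε =>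
    eventually_norm_x₀_add_smul_le (p := -p) (neg_zero (G := ℝ) ▸ h₁.neg)
      (neg_zero (G := ℝ) ▸ h₂.neg) (neg_zero (G := ℝ) ▸ h₃.neg) hε
  simpa using this

lemma apply_eq_limFst_mul_add_limSnd_mul {f : StrongDual ℝ X} (hf : ‖f‖ ≤ 1) (hfx : f x₀ = 1)
    (w : X) : f w = limFst w * f e₁ + limSnd w * f e₂ := by
  obtain ⟨a, b, c, ha, hb, hc, habc⟩ := w.2
  rw [limFst_eq ha, limSnd_eq hb]
  have h₀ : f (w - a • e₁ - b • e₂) = 0 := by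
    refine apply_eq_zero_of_tendsto_zero hf hfx ?_ ?_ ?_
    · exact (tendsto_sub_nhds_zero_iff.2 ha).congr fun n => by
        show _ = _ - a * 1 - b * 0; ring
    · exact (tendsto_sub_nhds_zero_iff.2 hb).congr fun n => by
        show _ = _ - a * 0 - b * 1; ring
    · have hc' := hc.add_const (a + b)
      rw [show c + (a + b) = 0 by linarith] at hc'
      exact hc'.congr fun n => by
        show _ = _ - a * -1 - b * -1; ring
  rw [map_sub, map_sub, map_smul, map_smul, smul_eq_mul, smul_eq_mul] at h₀
  linarith

lemma exists_mem_Icc_eq_smul_limFst_add_smul_limSnd {f : StrongDual ℝ X} (hf : ‖f‖ ≤ 1)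
    (hfx : f x₀ = 1) : ∃ a ∈ Set.Icc (0 : ℝ) 1, f = a • limFst + (a - 1) • limSnd := by
  have hrep := apply_eq_limFst_mul_add_limSnd_mul hf hfx
  have he₂ : f e₂ = f e₁ - 1 := by
    have := hrep x₀
    rw [limFst_x₀, limSnd_x₀, hfx] at this
    linarith
  have he₁ : f e₁ ≤ 1 := (apply_le_norm_of_norm_le_one hf e₁).trans norm_e₁_le
  have he₂' : -f e₂ ≤ 1 := by
    simpa using (apply_le_norm_of_norm_le_one hf (-e₂)).trans (by simpa using norm_e₂_le)
  refine ⟨f e₁, ⟨by linarith, he₁⟩, ContinuousLinearMap.ext fun w => ?_⟩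
  rw [hrep w, he₂]
  simp only [add_apply, smul_apply, smul_eq_mul]
  ring

lemma norm_smul_limFst_add_smul_limSnd_le {t₁ t₂ m : ℝ} (h₁ : |t₁| ≤ m) (h₂ : |t₂| ≤ m)
    (h₁₂ : |t₁ - t₂| ≤ m) : ‖t₁ • limFst + t₂ • limSnd‖ ≤ m :=
  ContinuousLinearMap.opNorm_le_bound _ ((abs_nonneg t₁).trans h₁) fun w => by
    simpa using abs_mul_add_mul_le (abs_limFst_le w) (abs_limSnd_le w)
      (abs_limFst_add_limSnd_le w) h₁ h₂ h₁₂

lemma le_norm_smul_limFst_add_smul_limSnd (t₁ t₂ : ℝ) :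
    max t₁ t₂ ≤ ‖t₁ • limFst + t₂ • limSnd‖ := by
  refine max_le ?_ ?_
  · simpa [limFst_e₁, limSnd_e₁] using
      (le_abs_self _).trans ((t₁ • limFst + t₂ • limSnd).unit_le_opNorm e₁ norm_e₁_le)
  · simpa [limFst_e₂, limSnd_e₂] using
      (le_abs_self _).trans ((t₁ • limFst + t₂ • limSnd).unit_le_opNorm e₂ norm_e₂_le)

lemma exists_max_norm_add_norm_sub_le {a : ℝ} (ha : a ∈ Set.Icc (0 : ℝ) 1) :
    ∃ g : StrongDual ℝ X, max ‖g + (a • limFst + (a - 1) • limSnd)‖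
      ‖g - (a • limFst + (a - 1) • limSnd)‖ ≤ ‖g‖ + 1 / 2 := by
  obtain ⟨ha₀, ha₁⟩ := ha
  set g : StrongDual ℝ X := (1 - a / 2) • limFst + ((1 + a) / 2) • limSnd
  set Q := max (1 - a / 2) ((1 + a) / 2)
  have hg : Q ≤ ‖g‖ := le_norm_smul_limFst_add_smul_limSnd _ _
  have hQ₁ : 1 - a / 2 ≤ Q := le_max_left _ _
  have hQ₂ : (1 + a) / 2 ≤ Q := le_max_right _ _
  refine ⟨g, max_le ?_ ?_⟩
  · rw [show g + (a • limFst + (a - 1) • limSnd) =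
      (1 + a / 2) • limFst + ((3 * a - 1) / 2) • limSnd by module]
    refine (norm_smul_limFst_add_smul_limSnd_le (m := Q + 1 / 2) ?_ ?_ ?_).trans (by linarith) <;>
      rw [abs_le] <;> constructor <;> linarith
  · rw [show g - (a • limFst + (a - 1) • limSnd) =
      (1 - 3 * a / 2) • limFst + ((3 - a) / 2) • limSnd by module]
    refine (norm_smul_limFst_add_smul_limSnd_le (m := Q + 1 / 2) ?_ ?_ ?_).trans (by linarith) <;>
      rw [abs_le] <;> constructor <;> linarith

/-- For `X = {(x,y,z) ∈ c ⊕_∞ c ⊕_∞ c : lim x + lim y + lim z = 0}`: for every boundary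
`C ⊆ S_{X*}` of `B_{X*}` there are `x* ∈ C` and an extreme point `x**` of `B_{X**}` with
`|x**(x*)| < 1`. -/
theorem exists_extremePoint_abs_lt_one_of_boundary (C : Set XDual)
    (hC_sphere : ∀ f ∈ C, ‖f‖ = 1)
    (hC_boundary : ∀ x : ↥limSumZeroSubspace, ∃ f ∈ C, XDual.toFunctional f x = ‖x‖) :
    ∃ f ∈ C, ∃ F : StrongDual ℝ XDual,
      F ∈ Set.extremePoints ℝ (Metric.closedBall (0 : StrongDual ℝ XDual) 1) ∧
      |F f| < 1 := by
  obtain ⟨f, hfC, hfx⟩ := hC_boundary x₀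
  obtain ⟨a, ha, hf⟩ := exists_mem_Icc_eq_smul_limFst_add_smul_limSnd (f := f.toFunctional)
    (hC_sphere f hfC).le (hfx.trans norm_x₀)
  obtain ⟨g, hg⟩ := exists_max_norm_add_norm_sub_le ha
  obtain ⟨F, hF, hFg⟩ := exists_mem_extremePoints_closedBall_dual_apply_eq_norm (E := XDual) g
  refine ⟨f, hfC, F, hF, ?_⟩
  have hgap : max ‖g + f.toFunctional‖ ‖g - f.toFunctional‖ - ‖g‖ < 1 := by
    rw [hf]
    linarith
  exact (abs_apply_le_of_apply_eq_norm (E := XDual) (g := g)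
    (mem_closedBall_zero_iff.1 (extremePoints_subset hF)) hFg f).trans_lt hgap
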